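/- Let H be a complex Hilbert space and let ∘ : E(H) × E(H) → E(H) satisfy the duality condition (A∘ρ is trace-class and Tr((A∘ρ)B) = Tr(ρ(A∘B)) for all ρ ∈ D(H) and A,B ∈ E(H)) and the unit condition (A∘I = I∘A = A for all A ∈ E(H)). Then for each A ∈ E(H) the map B ↦ A∘B is normal: whenever (B_i) is an increasing net in E(H) converging to B ∈ E(H) in the strong operator topology, the net (A∘B_i) is increasing and converges to A∘B in the strong operator topology. -/

import Mathlib

/-!
Common setup: effects, density operators, trace, square roots and the strong
operator topology on a complex Hilbert space `H`, together with the five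
conditions (duality, unit, weak associativity, continuity, purity) defining a
sequential product on the set `E(H)` of quantum effects.
-/

set_option maxHeartbeats 1000000
set_option synthInstance.maxHeartbeats 1000000

open scoped InnerProductSpace ComplexOrder
open Filter

noncomputable section

variable (H : Type*) [NormedAddCommGroup H] [InnerProductSpace ℂ H] [CompleteSpace H]

/-- The index set of a fixed Hilbert basis of `H`. -/
def stdIdx : Set H := (exists_hilbertBasis ℂ H).choose

/-- A fixed Hilbert basis of `H`. -/
def stdBasis : HilbertBasis (stdIdx H) ℂ H := (exists_hilbertBasis ℂ H).choose_spec.choose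

variable {H}

/-- The positive square root `A^{1/2}` of a (positive) operator `A`. -/
def sqrtOp (A : H →L[ℂ] H) : H →L[ℂ] H := CFC.sqrt A

/-- The trace of an operator, computed in the fixed Hilbert basis. -/
def traceOp (T : H →L[ℂ] H) : ℂ := ∑' i, ⟪(stdBasis H i : H), T (stdBasis H i)⟫_ℂ

/-- `T` is trace-class: `|T| = (T*T)^{1/2}` has finite trace. -/
def IsTraceClass (T : H →L[ℂ] H) : Prop :=
  Summable fun i => ⟪(stdBasis H i : H), sqrtOp (star T * T) (stdBasis H i)⟫_ℂ

/-- A quantum effect: an operator `A` with `0 ≤ A ≤ 1` in the Loewner order (in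
particular `A` is bounded and self-adjoint).  `E(H)` is the set of effects. -/
def IsEffect (A : H →L[ℂ] H) : Prop := 0 ≤ A ∧ A ≤ 1

/-- A density operator: a positive trace-class operator of unit trace.
`D(H)` is the set of density operators. -/
def IsDensity (ρ : H →L[ℂ] H) : Prop := 0 ≤ ρ ∧ IsTraceClass ρ ∧ traceOp ρ = 1

variable (H) in
/-- The strong operator topology on bounded operators: the topology of pointwise
convergence (as maps into `H` with its norm topology). -/
def sot : TopologicalSpace (H →L[ℂ] H) :=
  TopologicalSpace.induced (fun T => (T : H → H)) inferInstance

/-- `p` is a rank-one orthogonal projection. -/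
def IsRankOneProjection (p : H →L[ℂ] H) : Prop :=
  IsIdempotentElem p ∧ IsSelfAdjoint p ∧ LinearMap.rank (p : H →ₗ[ℂ] H) = 1

/-- `P_ψ`: the rank-one orthogonal projection onto the span of a unit vector `ψ`,
`x ↦ ⟪ψ, x⟫ • ψ`. -/
def projVec (ψ : H) : H →L[ℂ] H := (innerSL ℂ ψ).smulRight ψ

/-- `op` is a binary operation on `E(H)`: it maps pairs of effects to effects. -/
def EffectClosed (op : (H →L[ℂ] H) → (H →L[ℂ] H) → (H →L[ℂ] H)) : Prop :=
  ∀ A B, IsEffect A → IsEffect B → IsEffect (op A B)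

/-- Condition 1 (Duality): for all effects `A, B` and densities `ρ`, the operator
`A ∘ ρ` is trace-class and `Tr((A∘ρ)B) = Tr(ρ(A∘B))`. -/
def DualityCond (op : (H →L[ℂ] H) → (H →L[ℂ] H) → (H →L[ℂ] H)) : Prop :=
  ∀ A B ρ : H →L[ℂ] H, IsEffect A → IsEffect B → IsDensity ρ →
    IsTraceClass (op A ρ) ∧ traceOp (op A ρ * B) = traceOp (ρ * op A B)

/-- Condition 2 (Unit): `A ∘ I = I ∘ A = A` for every effect `A`. -/
def UnitCond (op : (H →L[ℂ] H) → (H →L[ℂ] H) → (H →L[ℂ] H)) : Prop :=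
  ∀ A : H →L[ℂ] H, IsEffect A → op A 1 = A ∧ op 1 A = A

/-- Condition 3 (Weak associativity): `A² ∘ B = A ∘ (A ∘ B)` for all effects `A, B`. -/
def WeakAssocCond (op : (H →L[ℂ] H) → (H →L[ℂ] H) → (H →L[ℂ] H)) : Prop :=
  ∀ A B : H →L[ℂ] H, IsEffect A → IsEffect B → op (A * A) B = op A (op A B)

/-- Condition 4 (Continuity): for each fixed effect `B`, the map `A ↦ A ∘ B` is
continuous on `E(H)` for the strong operator topology. -/
def ContinuityCond (op : (H →L[ℂ] H) → (H →L[ℂ] H) → (H →L[ℂ] H)) : Prop :=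
  ∀ B : H →L[ℂ] H, IsEffect B →
    @ContinuousOn _ _ (sot H) (sot H) (fun A => op A B) {A | IsEffect A}

/-- Condition 5 (Purity): for every effect `A` and every rank-one orthogonal
projection `p`, the operator `A ∘ p` has rank at most `1`. -/
def PurityCond (op : (H →L[ℂ] H) → (H →L[ℂ] H) → (H →L[ℂ] H)) : Prop :=
  ∀ A p : H →L[ℂ] H, IsEffect A → IsRankOneProjection p →
    LinearMap.rank ((op A p) : H →ₗ[ℂ] H) ≤ 1

/-!
For a unit vector `ψ`, duality with the density `P_ψ` gives
`⟪ψ, (A ∘ S) ψ⟫ = Tr (P_ψ (A ∘ S)) = Tr ((A ∘ P_ψ) S)`, and writing the positive trace-class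
operator `A ∘ P_ψ` as `R²` turns this into `∑ₖ ⟪R eₖ, S (R eₖ)⟫` over a Hilbert basis `(eₖ)`,
with `∑ₖ ‖R eₖ‖² < ∞`. Such a form is monotone in `S` and, by dominated convergence, continuous
along bounded strongly convergent nets, so `A ∘ Bᵢ` increases and converges weakly to `A ∘ B`.
An increasing weakly convergent net of self-adjoint operators converges strongly, because
`‖D x‖² ≤ ‖D‖ ⟪x, D x⟫` for `D = A ∘ B - A ∘ Bᵢ ≥ 0`.
-/

open ContinuousLinearMap RCLike Topology

section InnerProductSpace

variable {E κ : Type*} [NormedAddCommGroup E] [InnerProductSpace ℂ E] {v : κ → E}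

theorem ContinuousLinearMap.re_inner_apply_mono {S T : E →L[ℂ] E} (h : S ≤ T) (x : E) :
    re ⟪x, S x⟫_ℂ ≤ re ⟪x, T x⟫_ℂ := by
  have := ((le_def S T).mp h).re_inner_nonneg_right x
  rw [sub_apply, inner_sub_right, map_sub] at this
  linarith

theorem ContinuousLinearMap.le_of_forall_re_inner_le [CompleteSpace E] {S T : E →L[ℂ] E}
    (hS : IsSelfAdjoint S) (hT : IsSelfAdjoint T) (h : ∀ x, re ⟪x, S x⟫_ℂ ≤ re ⟪x, T x⟫_ℂ) :
    S ≤ T := by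
  refine ⟨(hT.sub hS).isSymmetric, fun x => ?_⟩
  rw [reApplyInnerSelf_apply, inner_re_symm, sub_apply, inner_sub_right, map_sub]
  linarith [h x]

theorem ContinuousLinearMap.norm_inner_apply_le (S : E →L[ℂ] E) (x : E) :
    ‖⟪x, S x⟫_ℂ‖ ≤ ‖S‖ * ‖x‖ ^ 2 :=
  calc ‖⟪x, S x⟫_ℂ‖ ≤ ‖x‖ * ‖S x‖ := norm_inner_le_norm _ _
    _ ≤ ‖x‖ * (‖S‖ * ‖x‖) := by gcongr; exact S.le_opNorm x
    _ = ‖S‖ * ‖x‖ ^ 2 := by ring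

theorem summable_inner_apply (hv : Summable fun k => ‖v k‖ ^ 2) (S : E →L[ℂ] E) :
    Summable fun k => ⟪v k, S (v k)⟫_ℂ :=
  .of_norm_bounded (hv.mul_left ‖S‖) fun k => norm_inner_apply_le S (v k)

theorem re_tsum_inner_apply_mono (hv : Summable fun k => ‖v k‖ ^ 2) {S T : E →L[ℂ] E}
    (h : S ≤ T) : re (∑' k, ⟪v k, S (v k)⟫_ℂ) ≤ re (∑' k, ⟪v k, T (v k)⟫_ℂ) :=
  hasSum_le (fun k => re_inner_apply_mono h (v k))
    (RCLike.hasSum_re ℂ (summable_inner_apply hv S).hasSum)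
    (RCLike.hasSum_re ℂ (summable_inner_apply hv T).hasSum)

theorem tendsto_tsum_inner_apply {ι : Type*} {l : Filter ι} (hv : Summable fun k => ‖v k‖ ^ 2)
    {S : ι → E →L[ℂ] E} {L : E →L[ℂ] E} {c : ℝ} (hS : ∀ i, ‖S i‖ ≤ c)
    (hconv : ∀ x, Tendsto (fun i => S i x) l (𝓝 (L x))) :
    Tendsto (fun i => ∑' k, ⟪v k, S i (v k)⟫_ℂ) l (𝓝 (∑' k, ⟪v k, L (v k)⟫_ℂ)) :=
  tendsto_tsum_of_dominated_convergence (hv.mul_left c)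
    (fun k => ((continuous_const.inner continuous_id).tendsto _).comp (hconv (v k)))
    (.of_forall fun i k => (norm_inner_apply_le _ _).trans (by gcongr; exact hS i))

theorem ContinuousLinearMap.inner_ofReal_smul_apply (T : E →L[ℂ] E) (r : ℝ) (y : E) :
    ⟪(r : ℂ) • y, T ((r : ℂ) • y)⟫_ℂ = (r : ℂ) ^ 2 * ⟪y, T y⟫_ℂ := by
  rw [map_smul, inner_smul_left, inner_smul_right, Complex.conj_ofReal]
  ring

theorem HilbertBasis.hasSum_norm_inner_sq {ι : Type*} (b : HilbertBasis ι ℂ E) (x : E) :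
    HasSum (fun i => ‖⟪b i, x⟫_ℂ‖ ^ 2) (‖x‖ ^ 2) := by
  simpa [b.repr_apply_apply] using lp.hasSum_norm (p := 2) (by norm_num) (b.repr x)

theorem HilbertBasis.summable_prod_norm_inner_sq (b : HilbertBasis κ ℂ E)
    (hv : Summable fun k => ‖v k‖ ^ 2) :
    Summable fun p : κ × κ => ‖⟪b p.2, v p.1⟫_ℂ‖ ^ 2 :=
  (summable_prod_of_nonneg fun _ => by positivity).mpr
    ⟨fun k => (b.hasSum_norm_inner_sq (v k)).summable,
      hv.congr fun k => (b.hasSum_norm_inner_sq (v k)).tsum_eq.symm⟩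

end InnerProductSpace

theorem traceOp_mul_comm {X Y : H →L[ℂ] H}
    (hX : Summable fun k => ‖adjoint X (stdBasis H k)‖ ^ 2)
    (hY : Summable fun k => ‖Y (stdBasis H k)‖ ^ 2) :
    traceOp (X * Y) = traceOp (Y * X) := by
  set e := stdBasis H
  set f : stdIdx H → stdIdx H → ℂ := fun k j => ⟪adjoint X (e k), e j⟫_ℂ * ⟪e j, Y (e k)⟫_ℂ
  have hf : Summable (Function.uncurry f) := by
    refine .of_norm_bounded (((e.summable_prod_norm_inner_sq hX).add
      (e.summable_prod_norm_inner_sq hY)).div_const 2) fun p => ?_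
    simp only [Function.uncurry, f, norm_mul, norm_inner_symm (adjoint X (e p.1))]
    nlinarith [sq_nonneg (‖⟪e p.2, adjoint X (e p.1)⟫_ℂ‖ - ‖⟪e p.2, Y (e p.1)⟫_ℂ‖)]
  have hXY : ∀ k, ⟪e k, (X * Y) (e k)⟫_ℂ = ∑' j, f k j := fun k => by
    rw [mul_apply_eq_comp, ← adjoint_inner_left, ← e.tsum_inner_mul_inner]
  have hYX : ∀ j, ⟪e j, (Y * X) (e j)⟫_ℂ = ∑' k, f k j := fun j => by
    rw [mul_apply_eq_comp, ← adjoint_inner_left, ← e.tsum_inner_mul_inner]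
    exact tsum_congr fun k => by simp only [f, adjoint_inner_left, mul_comm]
  calc traceOp (X * Y) = ∑' k, ∑' j, f k j := tsum_congr hXY
    _ = ∑' j, ∑' k, f k j := hf.tsum_comm.symm
    _ = traceOp (Y * X) := (tsum_congr hYX).symm

theorem isTraceClass_iff_of_nonneg {T : H →L[ℂ] H} (hT : 0 ≤ T) :
    IsTraceClass T ↔ Summable fun k => ⟪stdBasis H k, T (stdBasis H k)⟫_ℂ := by
  rw [IsTraceClass, sqrtOp, IsSelfAdjoint.of_nonneg hT |>.star_eq, CFC.sqrt_mul_self T hT]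

theorem isPositive_sqrtOp (T : H →L[ℂ] H) : (sqrtOp T).IsPositive :=
  (nonneg_iff_isPositive _).mp (CFC.sqrt_nonneg T)

theorem sqrtOp_mul_sqrtOp {T : H →L[ℂ] H} (hT : 0 ≤ T) : sqrtOp T * sqrtOp T = T :=
  CFC.sqrt_mul_sqrt_self T hT

theorem summable_norm_sqrtOp_apply_sq {T : H →L[ℂ] H} (hT : 0 ≤ T) (hTC : IsTraceClass T) :
    Summable fun k => ‖sqrtOp T (stdBasis H k)‖ ^ 2 := by
  refine (RCLike.summable_ofReal ℂ).mp
    (((isTraceClass_iff_of_nonneg hT).mp hTC).congr fun k => ?_)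
  rw [RCLike.ofReal_pow, ← inner_self_eq_norm_sq_to_K,
    (isPositive_sqrtOp T).inner_left_eq_inner_right, ← mul_apply_eq_comp, sqrtOp_mul_sqrtOp hT]

theorem traceOp_mul_eq_tsum_sqrtOp {T S : H →L[ℂ] H} (hT : 0 ≤ T) (hTC : IsTraceClass T)
    (hS : IsSelfAdjoint S) :
    traceOp (T * S) =
      ∑' k, ⟪sqrtOp T (stdBasis H k), S (sqrtOp T (stdBasis H k))⟫_ℂ := by
  set R := sqrtOp T
  have hR : R.IsPositive := isPositive_sqrtOp T
  have hv := summable_norm_sqrtOp_apply_sq hT hTC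
  have hRS : Summable fun k => ‖adjoint (R * S) (stdBasis H k)‖ ^ 2 := by
    refine (hv.mul_left (‖S‖ ^ 2)).of_nonneg_of_le (fun _ => by positivity) fun k => ?_
    rw [← star_eq_adjoint, star_mul, hS.star_eq, hR.isSelfAdjoint.star_eq, mul_apply_eq_comp,
      ← mul_pow]
    gcongr
    exact S.le_opNorm _
  calc traceOp (T * S) = traceOp (R * (R * S)) := by rw [← mul_assoc, sqrtOp_mul_sqrtOp hT]
    -- `R * S` need not be Hilbert–Schmidt, but its adjoint `S * R` is.
    _ = traceOp (R * S * R) := (traceOp_mul_comm hRS hv).symm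
    _ = _ := tsum_congr fun k => by
        rw [mul_apply_eq_comp, mul_apply_eq_comp, hR.inner_left_eq_inner_right]

theorem hasSum_inner_projVec_mul_apply (ψ : H) (X : H →L[ℂ] H) :
    HasSum (fun k => ⟪stdBasis H k, (projVec ψ * X) (stdBasis H k)⟫_ℂ) ⟪ψ, X ψ⟫_ℂ := by
  rw [← adjoint_inner_left]
  refine ((stdBasis H).hasSum_inner_mul_inner _ _).congr_fun fun k => ?_
  simp [projVec, adjoint_inner_left]

theorem traceOp_projVec_mul (ψ : H) (X : H →L[ℂ] H) :
    traceOp (projVec ψ * X) = ⟪ψ, X ψ⟫_ℂ :=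
  (hasSum_inner_projVec_mul_apply ψ X).tsum_eq

theorem isStarProjection_projVec {ψ : H} (hψ : ‖ψ‖ = 1) : IsStarProjection (projVec ψ) :=
  InnerProductSpace.isStarProjection_rankOne_self hψ

theorem isEffect_projVec {ψ : H} (hψ : ‖ψ‖ = 1) : IsEffect (projVec ψ) :=
  ⟨(isStarProjection_projVec hψ).nonneg, (isStarProjection_projVec hψ).le_one⟩

theorem isDensity_projVec {ψ : H} (hψ : ‖ψ‖ = 1) : IsDensity (projVec ψ) := by
  have hP := isEffect_projVec hψ
  have hsum := hasSum_inner_projVec_mul_apply ψ 1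
  rw [mul_one, one_apply_eq_self, inner_self_eq_norm_sq_to_K, hψ] at hsum
  exact ⟨hP.1, (isTraceClass_iff_of_nonneg hP.1).mpr hsum.summable,
    by norm_num [traceOp, hsum.tsum_eq]⟩

theorem IsEffect.norm_le_one {S : H →L[ℂ] H} (hS : IsEffect S) : ‖S‖ ≤ 1 :=
  (CStarAlgebra.norm_le_one_iff_of_nonneg S hS.1).mpr hS.2

theorem norm_apply_sq_le_of_nonneg {D : H →L[ℂ] H} (hD : 0 ≤ D) (x : H) :
    ‖D x‖ ^ 2 ≤ ‖D‖ * re ⟪x, D x⟫_ℂ := by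
  have hnorm : ‖D‖ = ‖sqrtOp D‖ ^ 2 := by
    rw [sqrtOp, CFC.norm_sqrt D hD, Real.sq_sqrt (norm_nonneg D)]
  set R := sqrtOp D
  have hR : R.IsPositive := isPositive_sqrtOp D
  have hDR : D = R * R := (sqrtOp_mul_sqrtOp hD).symm
  have hform : re ⟪x, D x⟫_ℂ = ‖R x‖ ^ 2 := by
    rw [hDR, mul_apply_eq_comp, ← hR.inner_left_eq_inner_right, inner_self_eq_norm_sq]
  rw [hnorm, hform, ← mul_pow, hDR, mul_apply_eq_comp]
  gcongr
  exact R.le_opNorm _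

theorem tendsto_apply_of_monotone_of_tendsto_inner {ι : Type*} [Preorder ι]
    [IsDirected ι (· ≤ ·)] [Nonempty ι] {C : ι → H →L[ℂ] H} {L : H →L[ℂ] H}
    (hC : Monotone C) (hCsa : ∀ i, IsSelfAdjoint (C i)) (hL : IsSelfAdjoint L)
    (hweak : ∀ x, Tendsto (fun i => ⟪x, C i x⟫_ℂ) atTop (𝓝 ⟪x, L x⟫_ℂ)) (x : H) :
    Tendsto (fun i => C i x) atTop (𝓝 (L x)) := by
  have hre : ∀ y, Tendsto (fun i => re ⟪y, C i y⟫_ℂ) atTop (𝓝 (re ⟪y, L y⟫_ℂ)) :=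
    fun y => (continuous_re.tendsto _).comp (hweak y)
  have hle : ∀ i, C i ≤ L := fun i => le_of_forall_re_inner_le (hCsa i) hL fun y =>
    Monotone.ge_of_tendsto (fun _ _ hij => re_inner_apply_mono (hC hij) y) (hre y) i
  have hgap : ∀ i, 0 ≤ L - C i := fun i => sub_nonneg.mpr (hle i)
  obtain ⟨i₀⟩ := ‹Nonempty ι›
  have hbound : ∀ᶠ i in atTop, ‖(L - C i) x‖ ^ 2 ≤ ‖L - C i₀‖ * re ⟪x, (L - C i) x⟫_ℂ := by
    filter_upwards [eventually_ge_atTop i₀] with i hi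
    refine (norm_apply_sq_le_of_nonneg (hgap i) x).trans ?_
    gcongr
    · exact ((nonneg_iff_isPositive _).mp (hgap i)).re_inner_nonneg_right x
    · exact CStarAlgebra.norm_le_norm_of_nonneg_of_le (hgap i) (sub_le_sub_left (hC hi) L)
  have hlim : Tendsto (fun i => ‖L - C i₀‖ * re ⟪x, (L - C i) x⟫_ℂ) atTop (𝓝 0) := by
    simpa [inner_sub_right] using ((hre x).const_sub (re ⟪x, L x⟫_ℂ)).const_mul ‖L - C i₀‖
  have hsq := squeeze_zero' (.of_forall fun i => by positivity) hbound hlim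
  rw [tendsto_iff_norm_sub_tendsto_zero]
  simpa [norm_sub_rev] using hsq.sqrt

section SequentialProduct

variable {op : (H →L[ℂ] H) → (H →L[ℂ] H) → (H →L[ℂ] H)} {A : H →L[ℂ] H}

theorem exists_inner_op_apply_eq_tsum_of_norm_eq_one (hmap : EffectClosed op)
    (hdual : DualityCond op) (hA : IsEffect A) {ψ : H} (hψ : ‖ψ‖ = 1) :
    ∃ v : stdIdx H → H, Summable (fun k => ‖v k‖ ^ 2) ∧
      ∀ S, IsEffect S → ⟪ψ, op A S ψ⟫_ℂ = ∑' k, ⟪v k, S (v k)⟫_ℂ := by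
  have hT := (hmap A _ hA (isEffect_projVec hψ)).1
  have hTC := (hdual A 1 _ hA ⟨zero_le_one, le_rfl⟩ (isDensity_projVec hψ)).1
  refine ⟨_, summable_norm_sqrtOp_apply_sq hT hTC, fun S hS => ?_⟩
  rw [← traceOp_projVec_mul, ← (hdual A S _ hA hS (isDensity_projVec hψ)).2,
    traceOp_mul_eq_tsum_sqrtOp hT hTC (.of_nonneg hS.1)]

theorem exists_inner_op_apply_eq_tsum (hmap : EffectClosed op) (hdual : DualityCond op)
    (hA : IsEffect A) (x : H) :
    ∃ v : stdIdx H → H, Summable (fun k => ‖v k‖ ^ 2) ∧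
      ∀ S, IsEffect S → ⟪x, op A S x⟫_ℂ = ∑' k, ⟪v k, S (v k)⟫_ℂ := by
  rcases eq_or_ne x 0 with rfl | hx
  · exact ⟨0, by simp, fun S _ => by simp⟩
  have hψ : ‖(‖x‖⁻¹ : ℂ) • x‖ = 1 := norm_smul_inv_norm hx
  obtain ⟨v, hv, hrepr⟩ := exists_inner_op_apply_eq_tsum_of_norm_eq_one hmap hdual hA hψ
  have hx' : x = (‖x‖ : ℂ) • ((‖x‖⁻¹ : ℂ) • x) := by
    rw [smul_smul, mul_inv_cancel₀ (by simpa using hx), one_smul]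
  refine ⟨fun k => (‖x‖ : ℂ) • v k, ?_, fun S hS => ?_⟩
  · simpa [norm_smul, mul_pow] using hv.mul_left (‖x‖ ^ 2)
  · conv_lhs => rw [hx']
    rw [inner_ofReal_smul_apply, hrepr S hS, ← tsum_mul_left]
    exact tsum_congr fun k => (inner_ofReal_smul_apply S ‖x‖ (v k)).symm

end SequentialProduct

theorem op_is_normal_general
    (op : (H →L[ℂ] H) → (H →L[ℂ] H) → (H →L[ℂ] H)) (hmap : EffectClosed op)
    (hdual : DualityCond op)
    (A : H →L[ℂ] H) (hA : IsEffect A)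
    {ι : Type*} [Nonempty ι] [Preorder ι] [IsDirected ι (· ≤ ·)]
    (Bnet : ι → H →L[ℂ] H) (B : H →L[ℂ] H)
    (hmono : Monotone Bnet) (heff : ∀ i, IsEffect (Bnet i)) (hB : IsEffect B)
    (hconv : ∀ x : H, Tendsto (fun i => Bnet i x) atTop (nhds (B x))) :
    Monotone (fun i => op A (Bnet i)) ∧
    ∀ x : H, Tendsto (fun i => op A (Bnet i) x) atTop (nhds (op A B x)) := by
  have hsa : ∀ {S}, IsEffect S → IsSelfAdjoint (op A S) := fun hS =>
    .of_nonneg (hmap A _ hA hS).1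
  have hforms : ∀ x, Monotone (fun i => re ⟪x, op A (Bnet i) x⟫_ℂ) ∧
      Tendsto (fun i => ⟪x, op A (Bnet i) x⟫_ℂ) atTop (𝓝 ⟪x, op A B x⟫_ℂ) := by
    intro x
    obtain ⟨v, hv, hrepr⟩ := exists_inner_op_apply_eq_tsum hmap hdual hA x
    simp only [hrepr _ (heff _), hrepr _ hB]
    exact ⟨fun i j hij => re_tsum_inner_apply_mono hv (hmono hij),
      tendsto_tsum_inner_apply hv (fun i => (heff i).norm_le_one) hconv⟩
  have hCmono : Monotone (fun i => op A (Bnet i)) := fun i j hij =>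
    le_of_forall_re_inner_le (hsa (heff i)) (hsa (heff j)) fun x => (hforms x).1 hij
  exact ⟨hCmono, tendsto_apply_of_monotone_of_tendsto_inner hCmono (fun i => hsa (heff i))
    (hsa hB) fun x => (hforms x).2⟩

/-- If `∘ : E(H) × E(H) → E(H)` satisfies the duality and unit conditions, then for every
effect `A` the map `B ↦ A ∘ B` is normal: if `(B_i)` is an increasing net of effects
converging to an effect `B` in the strong operator topology, then `(A ∘ B_i)` is an
increasing net converging to `A ∘ B` in the strong operator topology. -/
theorem op_is_normal
    (op : (H →L[ℂ] H) → (H →L[ℂ] H) → (H →L[ℂ] H)) (hmap : EffectClosed op)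
    (hdual : DualityCond op) (hunit : UnitCond op)
    (A : H →L[ℂ] H) (hA : IsEffect A)
    {ι : Type*} [Nonempty ι] [Preorder ι] [IsDirected ι (· ≤ ·)]
    (Bnet : ι → H →L[ℂ] H) (B : H →L[ℂ] H)
    (hmono : Monotone Bnet) (heff : ∀ i, IsEffect (Bnet i)) (hB : IsEffect B)
    (hconv : ∀ x : H, Tendsto (fun i => Bnet i x) atTop (nhds (B x))) :
    Monotone (fun i => op A (Bnet i)) ∧
    ∀ x : H, Tendsto (fun i => op A (Bnet i) x) atTop (nhds (op A B x)) :=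
  op_is_normal_general op hmap hdual A hA Bnet B hmono heff hB hconv
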